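/- For fictitious play in rock-paper-scissors with lexicographic tie-breaking, for all k ≥ 1: at time 9k²+6k+1, x = (3k²+4k+1, 3k², 3k²+2k) and U = (2k, 2k+1, −4k−1); at time 9k²+12k+4, x = (3k²+4k+1, 3k²+6k+3, 3k²+2k) and U = (−4k−3, 2k+1, 2k+2). -/

import Mathlib

open Matrix

/-- The rock-paper-scissors payoff matrix. -/
def Arps : Matrix (Fin 3) (Fin 3) ℚ := !![0,-1,1; 1,0,-1; -1,1,0]

/-- Lexicographic argmax of a 3-vector: the smallest index attaining the maximum. -/
def lexArgmax (v : Fin 3 → ℚ) : Fin 3 :=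
  if v 1 ≤ v 0 ∧ v 2 ≤ v 0 then 0 else if v 2 ≤ v 1 then 1 else 2

/-- Fictitious play iterates for RPS with lexicographic tie-breaking, x_0 = 0. -/
def rpsX : ℕ → (Fin 3 → ℚ)
  | 0 => 0
  | t+1 => rpsX t + Pi.single (lexArgmax (Arps.mulVec (rpsX t))) 1

lemma e0 : (Pi.single (0:Fin 3) 1 : Fin 3 → ℚ) = ![1,0,0] := by
  funext j; fin_cases j <;> simp [Pi.single_apply]
lemma e1 : (Pi.single (1:Fin 3) 1 : Fin 3 → ℚ) = ![0,1,0] := by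
  funext j; fin_cases j <;> simp [Pi.single_apply]
lemma e2 : (Pi.single (2:Fin 3) 1 : Fin 3 → ℚ) = ![0,0,1] := by
  funext j; fin_cases j <;> simp [Pi.single_apply]

lemma mulVec_abc (a b c : ℚ) : Arps.mulVec ![a,b,c] = ![c-b, a-c, b-a] := by
  funext j; fin_cases j <;> simp [Arps, mulVec, dotProduct, Fin.sum_univ_three] <;> ring

lemma vec_add_smul (a b c p q r s : ℚ) :
    ![a,b,c] + s • ![p,q,r] = ![a+s*p, b+s*q, c+s*r] := by
  funext j; fin_cases j <;> simp

lemma lex0 (v : Fin 3 → ℚ) (h1 : v 1 ≤ v 0) (h2 : v 2 ≤ v 0) : lexArgmax v = 0 := by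
  simp [lexArgmax, h1, h2]
lemma lex1 (v : Fin 3 → ℚ) (h1 : v 0 < v 1) (h2 : v 2 ≤ v 1) : lexArgmax v = 1 := by
  simp [lexArgmax, h2, not_le.2 h1]
lemma lex2 (v : Fin 3 → ℚ) (h0 : v 0 < v 2) (h1 : v 1 < v 2) : lexArgmax v = 2 := by
  simp [lexArgmax, not_le.2 h0, not_le.2 h1]

lemma run (i : Fin 3) (t n : ℕ)
    (h : ∀ m : ℕ, m < n → lexArgmax (Arps.mulVec (rpsX t) + (m:ℚ) • Arps.mulVec (Pi.single i 1)) = i) :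
    rpsX (t+n) = rpsX t + (n:ℚ) • (Pi.single i 1 : Fin 3 → ℚ) := by
  induction n with
  | zero => simp
  | succ n ih =>
    have hxn := ih (fun m hm => h m (by omega))
    have hu : Arps.mulVec (rpsX (t+n))
        = Arps.mulVec (rpsX t) + (n:ℚ) • Arps.mulVec (Pi.single i 1) := by
      rw [hxn, Arps.mulVec_add, Arps.mulVec_smul]
    have hs : rpsX (t + (n+1)) = rpsX (t+n) + Pi.single (lexArgmax (Arps.mulVec (rpsX (t+n)))) 1 := rfl
    rw [hs, hu, h n (by omega), hxn, Nat.cast_succ, add_smul, one_smul, add_assoc]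

lemma seg (i : Fin 3) (t n : ℕ) (x : Fin 3 → ℚ) (hx : rpsX t = x)
    (h : ∀ m : ℕ, m < n → lexArgmax (Arps.mulVec x + (m:ℚ) • Arps.mulVec (Pi.single i 1)) = i) :
    rpsX (t+n) = x + (n:ℚ) • (Pi.single i 1 : Fin 3 → ℚ) := by
  subst hx; exact run i t n h

/-- Run of index 1 of length 6k+3 from T1(k) to T2(k). -/
lemma hop12 (k : ℕ) (t : ℕ)
    (hx : rpsX t = ![3*(k:ℚ)^2 + 4*k + 1, 3*(k:ℚ)^2, 3*(k:ℚ)^2 + 2*k]) :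
    rpsX (t + (6*k+3)) = ![3*(k:ℚ)^2 + 4*k + 1, 3*(k:ℚ)^2 + 6*k + 3, 3*(k:ℚ)^2 + 2*k] := by
  have h := seg 1 t (6*k+3) _ hx (by
    intro m hm
    have hm2 : m ≤ 6*k+2 := by omega
    have hmq : (m:ℚ) ≤ 6*k+2 := by exact_mod_cast hm2
    rw [mulVec_abc, e1, mulVec_abc]
    apply lex1 <;> simp <;> linarith)
  rw [e1, vec_add_smul] at h
  rw [h]; push_cast; congr 1 <;> norm_num <;> ring

/-- Run of index 2 of length 6k+5 from T2(k). -/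
lemma hop23 (k : ℕ) (t : ℕ)
    (hx : rpsX t = ![3*(k:ℚ)^2 + 4*k + 1, 3*(k:ℚ)^2 + 6*k + 3, 3*(k:ℚ)^2 + 2*k]) :
    rpsX (t + (6*k+5)) = ![3*(k:ℚ)^2 + 4*k + 1, 3*(k:ℚ)^2 + 6*k + 3, 3*(k:ℚ)^2 + 8*k + 5] := by
  have h := seg 2 t (6*k+5) _ hx (by
    intro m hm
    have hmq : (m:ℚ) < 6*k+5 := by exact_mod_cast hm
    rw [mulVec_abc, e2, mulVec_abc]
    apply lex2 <;> simp <;> linarith)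
  rw [e2, vec_add_smul] at h
  rw [h]; push_cast; congr 1 <;> norm_num <;> ring

/-- Run of index 0 of length 6k+7 to T1(k+1). -/
lemma hop30 (k : ℕ) (t : ℕ)
    (hx : rpsX t = ![3*(k:ℚ)^2 + 4*k + 1, 3*(k:ℚ)^2 + 6*k + 3, 3*(k:ℚ)^2 + 8*k + 5]) :
    rpsX (t + (6*k+7)) = ![3*(k:ℚ)^2 + 10*k + 8, 3*(k:ℚ)^2 + 6*k + 3, 3*(k:ℚ)^2 + 8*k + 5] := by
  have h := seg 0 t (6*k+7) _ hx (by
    intro m hm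
    have hm2 : m ≤ 6*k+6 := by omega
    have hmq : (m:ℚ) ≤ 6*k+6 := by exact_mod_cast hm2
    have hmq0 : (0:ℚ) ≤ (m:ℚ) := by positivity
    rw [mulVec_abc, e0, mulVec_abc]
    apply lex0 <;> simp <;> linarith)
  rw [e0, vec_add_smul] at h
  rw [h]; push_cast; congr 1 <;> norm_num <;> ring

lemma base16 : rpsX 16 = ![8, 3, 5] := by
  have h0 : rpsX 0 = ![0,0,0] := by funext j; fin_cases j <;> simp [rpsX]
  have h1 : rpsX 1 = ![1,0,0] := by
    have h := seg 0 0 1 _ h0 (by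
      intro m hm
      have : m = 0 := by omega
      subst this
      rw [mulVec_abc, e0, mulVec_abc]
      apply lex0 <;> simp)
    rw [e0, vec_add_smul] at h
    rw [show (1:ℕ) = 0 + 1 from rfl, h]; norm_num
  have h4 : rpsX 4 = ![1,3,0] := by
    have h := seg 1 1 3 _ h1 (by
      intro m hm
      have hmq : (m:ℚ) ≤ 2 := by exact_mod_cast (by omega : m ≤ 2)
      have hmq0 : (0:ℚ) ≤ (m:ℚ) := by positivity
      rw [mulVec_abc, e1, mulVec_abc]
      apply lex1 <;> simp <;> linarith)
    rw [e1, vec_add_smul] at h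
    rw [show (4:ℕ) = 1 + 3 from rfl, h]; norm_num
  have h9 : rpsX 9 = ![1,3,5] := by
    have h := seg 2 4 5 _ h4 (by
      intro m hm
      have hmq : (m:ℚ) < 5 := by exact_mod_cast hm
      have hmq0 : (0:ℚ) ≤ (m:ℚ) := by positivity
      rw [mulVec_abc, e2, mulVec_abc]
      apply lex2 <;> simp <;> linarith)
    rw [e2, vec_add_smul] at h
    rw [show (9:ℕ) = 4 + 5 from rfl, h]; norm_num
  have h := seg 0 9 7 _ h9 (by
    intro m hm
    have hmq : (m:ℚ) ≤ 6 := by exact_mod_cast (by omega : m ≤ 6)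
    have hmq0 : (0:ℚ) ≤ (m:ℚ) := by positivity
    rw [mulVec_abc, e0, mulVec_abc]
    apply lex0 <;> simp <;> linarith)
  rw [e0, vec_add_smul] at h
  rw [show (16:ℕ) = 9 + 7 from rfl, h]; norm_num

lemma T1 (k : ℕ) (hk : 1 ≤ k) :
    rpsX (9*k^2+6*k+1) = ![3*(k:ℚ)^2 + 4*k + 1, 3*(k:ℚ)^2, 3*(k:ℚ)^2 + 2*k] := by
  induction k, hk using Nat.le_induction with
  | base =>
    rw [show 9*1^2+6*1+1 = 16 from rfl, base16]; norm_num
  | succ k hk ih =>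
    have h2 := hop12 k _ ih
    rw [show 9*k^2+6*k+1 + (6*k+3) = 9*k^2+12*k+4 from by ring] at h2
    have h3 := hop23 k _ h2
    rw [show 9*k^2+12*k+4 + (6*k+5) = 9*k^2+18*k+9 from by ring] at h3
    have h4 := hop30 k _ h3
    rw [show 9*k^2+18*k+9 + (6*k+7) = 9*(k+1)^2+6*(k+1)+1 from by ring] at h4
    rw [h4]; congr 1 <;> push_cast <;> ring_nf


/-- for all k ≥ 1, at time 9k²+6k+1, x = (3k²+4k+1, 3k², 3k²+2k) and
U = (2k, 2k+1, −4k−1); at time 9k²+12k+4, x = (3k²+4k+1, 3k²+6k+3, 3k²+2k) and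
U = (−4k−3, 2k+1, 2k+2). -/
theorem rps_vertices_two_three (k : ℕ) (hk : 1 ≤ k) :
    (rpsX (9*k^2+6*k+1) = ![3*(k:ℚ)^2 + 4*k + 1, 3*(k:ℚ)^2, 3*(k:ℚ)^2 + 2*k] ∧
      Arps.mulVec (rpsX (9*k^2+6*k+1)) = ![2*(k:ℚ), 2*(k:ℚ)+1, -4*(k:ℚ)-1]) ∧
    (rpsX (9*k^2+12*k+4) = ![3*(k:ℚ)^2 + 4*k + 1, 3*(k:ℚ)^2 + 6*k + 3, 3*(k:ℚ)^2 + 2*k] ∧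
      Arps.mulVec (rpsX (9*k^2+12*k+4)) = ![-4*(k:ℚ)-3, 2*(k:ℚ)+1, 2*(k:ℚ)+2]) := by
  have h1 := T1 k hk
  have h2 := hop12 k _ h1
  rw [show 9*k^2+6*k+1 + (6*k+3) = 9*k^2+12*k+4 from by ring] at h2
  refine ⟨⟨h1, ?_⟩, h2, ?_⟩
  · rw [h1, mulVec_abc]; congr 1 <;> norm_num <;> constructor <;> ring
  · rw [h2, mulVec_abc]; congr 1 <;> norm_num <;> ring_nf <;> exact ⟨trivial, trivial⟩
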